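/- Let A ∈ ℝ^{m×n} and let 0 ≤ k ≤ m be an integer. Then ∑_{S ⊆ {1,…,m}, |S|=k} det(A_S A_S^T) · ‖A − π_S(A)‖_F² = (k+1) · ∑_{T ⊆ {1,…,m}, |T|=k+1} det(A_T A_T^T). -/

import Mathlib

open Matrix BigOperators

noncomputable def projSpan {m n : ℕ} (A : Matrix (Fin m) (Fin n) ℝ) (S : Finset (Fin m)) :
    Matrix (Fin m) (Fin n) ℝ := fun i j =>
  (Submodule.orthogonalProjectionOnto
      (Submodule.span ℝ (Set.range (fun s : S => (WithLp.equiv 2 (Fin n → ℝ)).symm (A s))))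
      ((WithLp.equiv 2 (Fin n → ℝ)).symm (A i)) : EuclideanSpace ℝ (Fin n)) j

def rowSub {m n : ℕ} (A : Matrix (Fin m) (Fin n) ℝ) (S : Finset (Fin m)) :
    Matrix {x // x ∈ S} (Fin n) ℝ := fun i j => A i.1 j

noncomputable def gramDet {m n : ℕ} (A : Matrix (Fin m) (Fin n) ℝ) (S : Finset (Fin m)) : ℝ :=
  (rowSub A S * (rowSub A S)ᵀ).det

noncomputable def frobSq {m n : ℕ} (M : Matrix (Fin m) (Fin n) ℝ) : ℝ :=
  ∑ i, ∑ j, (M i j)^2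

noncomputable def specNorm {m n : ℕ} (M : Matrix (Fin m) (Fin n) ℝ) : ℝ :=
  ‖LinearMap.toContinuousLinearMap (Matrix.toEuclideanLin M)‖

/-!
Appending a vector `w` to a family `v` multiplies the Gram determinant by the squared distance
from `w` to `span v`: writing `w = r + p` with `p ∈ span v` and `r ⊥ span v`, removing `p` is a
unitriangular change of the family, after which the Gram matrix is block diagonal. Hence the
left-hand side equals `∑_{|S| = k} ∑_{i ∉ S} det(A_{S ∪ {i}} A_{S ∪ {i}}ᵀ)`, and every
`(k + 1)`-set `T` arises from exactly `k + 1` pairs `(S, i)`, namely `S = T \ {i}` for `i ∈ T`.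
-/

namespace Matrix

variable {ι κ E : Type*} [NormedAddCommGroup E] [InnerProductSpace ℝ E]

theorem gram_sum_smul [Fintype κ] (F : Matrix ι κ ℝ) (u : κ → E) :
    gram ℝ (fun i => ∑ j, F i j • u j) = F * gram ℝ u * Fᵀ := by
  ext i i'
  simp only [gram_apply, sum_inner, inner_sum, real_inner_smul_left, real_inner_smul_right,
    mul_apply, transpose_apply, Finset.sum_mul]
  exact Finset.sum_congr rfl fun _ _ => Finset.sum_congr rfl fun _ _ => by ring

theorem gram_sumElim (u : ι → E) (w : κ → E) :
    gram ℝ (Sum.elim u w) =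
      fromBlocks (gram ℝ u) (of fun i j => inner ℝ (u i) (w j))
        (of fun j i => inner ℝ (w j) (u i)) (gram ℝ w) := by
  ext (i | j) (i' | j') <;> rfl

variable [Fintype ι] [DecidableEq ι]

theorem det_gram_sumElim_of_inner_eq_zero (v : ι → E) {r : E}
    (hr : ∀ i, inner ℝ (v i) r = 0) :
    (gram ℝ (Sum.elim v fun _ : Unit => r)).det = (gram ℝ v).det * ‖r‖ ^ 2 := by
  have hlower : (of fun _ i => inner ℝ r (v i) : Matrix Unit ι ℝ) = 0 := by
    ext _ i
    simpa [real_inner_comm] using hr i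
  rw [gram_sumElim, hlower, det_fromBlocks_zero₂₁, det_unique (gram ℝ fun _ : Unit => r),
    gram_apply, real_inner_self_eq_norm_sq]

theorem det_gram_sumElim_add_mem_span (v : ι → E) (r : E) {x : E}
    (hx : x ∈ Submodule.span ℝ (Set.range v)) :
    (gram ℝ (Sum.elim v fun _ : Unit => r + x)).det =
      (gram ℝ (Sum.elim v fun _ : Unit => r)).det := by
  obtain ⟨c, rfl⟩ := (Submodule.mem_span_range_iff_exists_fun ℝ).mp hx
  set F : Matrix (ι ⊕ Unit) (ι ⊕ Unit) ℝ := fromBlocks 1 0 (of fun _ j => c j) 1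
  have hF : F.det = 1 := by simp [F]
  have hcomb : (Sum.elim v fun _ : Unit => r + ∑ i, c i • v i) =
      fun a => ∑ b, F a b • Sum.elim v (fun _ : Unit => r) b := by
    ext (i | _) <;> simp [F, Fintype.sum_sum_type, one_apply, add_comm]
  rw [hcomb, gram_sum_smul, det_mul, det_mul, det_transpose, hF, one_mul, mul_one]

theorem det_gram_sumElim_eq_mul_norm_sub_starProjection_sq (v : ι → E)
    [(Submodule.span ℝ (Set.range v)).HasOrthogonalProjection] (w : E) :
    (gram ℝ (Sum.elim v fun _ : Unit => w)).det =
      (gram ℝ v).det * ‖w - (Submodule.span ℝ (Set.range v)).starProjection w‖ ^ 2 := by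
  set K := Submodule.span ℝ (Set.range v)
  have hw : w = (w - K.starProjection w) + K.starProjection w := (sub_add_cancel _ _).symm
  have horth : ∀ i, inner ℝ (v i) (w - K.starProjection w) = 0 := fun i =>
    K.inner_right_of_mem_orthogonal (Submodule.subset_span ⟨i, rfl⟩)
      (K.sub_starProjection_mem_orthogonal w)
  conv_lhs => rw [hw]
  rw [det_gram_sumElim_add_mem_span v _ (K.starProjection_apply_mem w),
    det_gram_sumElim_of_inner_eq_zero v horth]

end Matrix

namespace Finset

theorem sum_powersetCard_sum_sdiff_insert {α M : Type*} [DecidableEq α] [AddCommMonoid M]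
    (s : Finset α) (k : ℕ) (f : Finset α → M) :
    ∑ S ∈ s.powersetCard k, ∑ i ∈ s \ S, f (insert i S) =
      (k + 1) • ∑ T ∈ s.powersetCard (k + 1), f T := by
  have hcard : ∀ T ∈ s.powersetCard (k + 1), (k + 1) • f T = ∑ _i ∈ T, f T := by
    intro T hT
    rw [sum_const, (mem_powersetCard.mp hT).2]
  rw [smul_sum, sum_congr rfl hcard, sum_sigma', sum_sigma']
  refine sum_nbij' (fun p => ⟨insert p.2 p.1, p.2⟩) (fun p => ⟨p.1.erase p.2, p.2⟩)
    ?_ ?_ ?_ ?_ (fun _ _ => rfl)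
  · rintro ⟨S, i⟩ h
    simp only [mem_sigma, mem_powersetCard, mem_sdiff] at h ⊢
    exact ⟨⟨insert_subset h.2.1 h.1.1, by rw [card_insert_of_notMem h.2.2, h.1.2]⟩,
      mem_insert_self _ _⟩
  · rintro ⟨T, i⟩ h
    simp only [mem_sigma, mem_powersetCard, mem_sdiff] at h ⊢
    exact ⟨⟨(erase_subset _ _).trans h.1.1, by rw [card_erase_of_mem h.2, h.1.2]; rfl⟩,
      h.1.1 h.2, notMem_erase _ _⟩
  · rintro ⟨S, i⟩ h
    simp only [mem_sigma, mem_sdiff] at h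
    simp [erase_insert h.2.2]
  · rintro ⟨T, i⟩ h
    simp only [mem_sigma] at h
    simp [insert_erase h.2]

end Finset

section

variable {m n : ℕ} (A : Matrix (Fin m) (Fin n) ℝ) (S : Finset (Fin m))

noncomputable abbrev rowSpan : Submodule ℝ (EuclideanSpace ℝ (Fin n)) :=
  Submodule.span ℝ (Set.range fun s : S => WithLp.toLp 2 (A s))

theorem frobSq_eq_sum_norm_sq (M : Matrix (Fin m) (Fin n) ℝ) :
    frobSq M = ∑ i, ‖WithLp.toLp 2 (M i)‖ ^ 2 := by
  simp [frobSq, EuclideanSpace.real_norm_sq_eq]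

theorem frobSq_sub_projSpan :
    frobSq (A - projSpan A S) =
      ∑ i ∈ Sᶜ,
        ‖WithLp.toLp 2 (A i) - (rowSpan A S).starProjection (WithLp.toLp 2 (A i))‖ ^ 2 := by
  have hrow : ∀ i, WithLp.toLp 2 ((A - projSpan A S) i) =
      WithLp.toLp 2 (A i) - (rowSpan A S).starProjection (WithLp.toLp 2 (A i)) := fun _ => rfl
  simp only [frobSq_eq_sum_norm_sq, hrow]
  refine (Finset.sum_subset (Finset.subset_univ _) fun i _ hi => ?_).symm
  have hmem : WithLp.toLp 2 (A i) ∈ rowSpan A S :=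
    Submodule.subset_span ⟨⟨i, by simpa using hi⟩, rfl⟩
  rw [Submodule.starProjection_eq_self_iff.mpr hmem, sub_self, norm_zero, zero_pow two_ne_zero]

theorem gramDet_eq_det_gram : gramDet A S = (gram ℝ fun s : S => WithLp.toLp 2 (A s)).det := by
  rw [gramDet]
  congr 1
  ext s t
  simp [gram_apply, rowSub, mul_apply, PiLp.inner_apply, mul_comm]

theorem gramDet_insert {i : Fin m} (hi : i ∉ S) :
    gramDet A (insert i S) =
      gramDet A S *
        ‖WithLp.toLp 2 (A i) - (rowSpan A S).starProjection (WithLp.toLp 2 (A i))‖ ^ 2 := by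
  let e := (Finset.subtypeInsertEquivOption hi).trans (Equiv.optionEquivSumPUnit.{0, 0} S)
  have hrows :
      (Sum.elim (fun s : S => WithLp.toLp 2 (A s)) fun _ : Unit => WithLp.toLp 2 (A i)) ∘ e
        = fun t : (insert i S : Finset (Fin m)) => WithLp.toLp 2 (A t) := by
    funext ⟨t, _⟩
    by_cases h : t = i
    · subst h
      simp [e, Finset.subtypeInsertEquivOption]
    · simp [e, Finset.subtypeInsertEquivOption, h]
  rw [gramDet_eq_det_gram, gramDet_eq_det_gram, ← hrows]
  exact (det_submatrix_equiv_self e _).trans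
    (det_gram_sumElim_eq_mul_norm_sub_starProjection_sq (fun s : S => WithLp.toLp 2 (A s)) _)

end

theorem sum_det_frob_univ_general {m n : ℕ} (A : Matrix (Fin m) (Fin n) ℝ) (k : ℕ) :
    ∑ S ∈ Finset.powersetCard k (Finset.univ : Finset (Fin m)),
        gramDet A S * frobSq (A - projSpan A S)
      = ((k : ℝ) + 1) *
          ∑ T ∈ Finset.powersetCard (k + 1) (Finset.univ : Finset (Fin m)), gramDet A T := by
  calc ∑ S ∈ Finset.powersetCard k Finset.univ, gramDet A S * frobSq (A - projSpan A S)
      = ∑ S ∈ Finset.powersetCard k Finset.univ,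
          ∑ i ∈ Finset.univ \ S, gramDet A (insert i S) := by
        refine Finset.sum_congr rfl fun S _ => ?_
        rw [frobSq_sub_projSpan, Finset.compl_eq_univ_sdiff, Finset.mul_sum]
        exact Finset.sum_congr rfl fun i hi =>
          (gramDet_insert A S (Finset.mem_sdiff.mp hi).2).symm
    _ = ((k : ℝ) + 1) * ∑ T ∈ Finset.powersetCard (k + 1) Finset.univ, gramDet A T := by
        rw [Finset.sum_powersetCard_sum_sdiff_insert, nsmul_eq_mul, Nat.cast_succ]

/-- ∑_{|S|=k} det(A_S A_Sᵀ)·‖A − π_S(A)‖_F² = (k+1)·∑_{|T|=k+1} det(A_T A_Tᵀ). -/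
theorem sum_det_frob_univ {m n : ℕ} (A : Matrix (Fin m) (Fin n) ℝ) (k : ℕ) (hk : k ≤ m) :
    ∑ S ∈ Finset.powersetCard k (Finset.univ : Finset (Fin m)),
        gramDet A S * frobSq (A - projSpan A S)
      = ((k : ℝ) + 1) *
          ∑ T ∈ Finset.powersetCard (k + 1) (Finset.univ : Finset (Fin m)), gramDet A T :=
  sum_det_frob_univ_general A k
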